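/- arXiv:1706.07775 — 15 statements merged into one kernel-verified Lean document; each statement's English description precedes it below -/
import Mathlib

section
/- Let R be a unital ring and a, b, c ∈ R. If y is a (b,c)-inverse of a (i.e., y ∈ bRy ∩ yRc, yab = b, and cay = c), then y is unique. -/
/-- `y` is a `(b,c)`-inverse of `a`: `y ∈ bRy ∩ yRc`, `yab = b`, `cay = c`. -/
def IsBCInverse {R : Type*} [Ring R] (a b c y : R) : Prop :=
  (∃ r : R, y = b * r * y) ∧ (∃ s : R, y = y * s * c) ∧ y * a * b = b ∧ c * a * y = c

/-! Two `(b,c)`-inverses `y₁, y₂` of `a` both equal `y₁ a y₂`: since `y₁ ∈ y₁Rc` and `c a y₂ = c`,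
right multiplication by `a y₂` fixes `y₁`; symmetrically, since `y₂ ∈ bRy₂` and `y₁ a b = b`,
left multiplication by `y₁ a` fixes `y₂`. -/

section Semigroup

variable {M : Type*} [Semigroup M]

theorem mul_mul_eq_left_of_eq_mul_mul {y s c a z : M} (hy : y = y * s * c)
    (hc : c * a * z = c) : y * a * z = y :=
  calc y * a * z = y * s * c * a * z := by rw [← hy]
    _ = y * s * (c * a * z) := by simp only [mul_assoc]
    _ = y := by rw [hc, ← hy]

theorem mul_mul_eq_right_of_eq_mul_mul {y a b r z : M} (hz : z = b * r * z)
    (hb : y * a * b = b) : y * a * z = z :=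
  calc y * a * z = y * a * (b * r * z) := by rw [← hz]
    _ = y * a * b * (r * z) := by simp only [mul_assoc]
    _ = z := by rw [hb, ← mul_assoc, ← hz]

end Semigroup

theorem bc_inverse_unique {R : Type*} [Ring R] (a b c y₁ y₂ : R)
    (h₁ : IsBCInverse a b c y₁) (h₂ : IsBCInverse a b c y₂) : y₁ = y₂ := by
  obtain ⟨-, ⟨s₁, hs₁⟩, hb₁, -⟩ := h₁
  obtain ⟨⟨r₂, hr₂⟩, -, -, hc₂⟩ := h₂
  calc y₁ = y₁ * a * y₂ := (mul_mul_eq_left_of_eq_mul_mul hs₁ hc₂).symm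
    _ = y₂ := mul_mul_eq_right_of_eq_mul_mul hr₂ hb₁
end

section
/- Let R be a unital ring and a, b, c, y ∈ R. Then y is the (b,c)-inverse of a if and only if yay = y, yR = bR, and Ry = Rc. -/
section Monoid

variable {M : Type*} [Monoid M]

theorem setOf_exists_eq_mul_right_eq_iff (x y : M) :
    {z : M | ∃ r, z = x * r} = {z : M | ∃ r, z = y * r} ↔
      (∃ r, x = y * r) ∧ ∃ r, y = x * r := by
  constructor
  · intro h
    exact ⟨(Set.ext_iff.mp h x).mp ⟨1, (mul_one x).symm⟩,
      (Set.ext_iff.mp h y).mpr ⟨1, (mul_one y).symm⟩⟩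
  · rintro ⟨⟨s, rfl⟩, ⟨t, ht⟩⟩
    ext z
    constructor
    · rintro ⟨r, rfl⟩
      exact ⟨s * r, mul_assoc y s r⟩
    · rintro ⟨r, rfl⟩
      exact ⟨t * r, by rw [← mul_assoc, ← ht]⟩

theorem setOf_exists_eq_mul_left_eq_iff (x y : M) :
    {z : M | ∃ r, z = r * x} = {z : M | ∃ r, z = r * y} ↔
      (∃ r, x = r * y) ∧ ∃ r, y = r * x := by
  constructor
  · intro h
    exact ⟨(Set.ext_iff.mp h x).mp ⟨1, (one_mul x).symm⟩,
      (Set.ext_iff.mp h y).mpr ⟨1, (one_mul y).symm⟩⟩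
  · rintro ⟨⟨s, rfl⟩, ⟨t, ht⟩⟩
    ext z
    constructor
    · rintro ⟨r, rfl⟩
      exact ⟨r * s, (mul_assoc r s y).symm⟩
    · rintro ⟨r, rfl⟩
      exact ⟨r * t, by rw [mul_assoc, ← ht]⟩

end Monoid

section Ring

variable {R : Type*} [Ring R] {a b c y : R}

theorem IsBCInverse.mul_mul_self (h : IsBCInverse a b c y) : y * a * y = y := by
  obtain ⟨⟨r, hr⟩, -, hb, -⟩ := h
  calc y * a * y = y * a * (b * r * y) := by rw [← hr]
    _ = y * a * b * r * y := by simp only [mul_assoc]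
    _ = y := by rw [hb, ← hr]

theorem IsBCInverse.of_mul_mul_self {r s t u : R} (hyay : y * a * y = y)
    (hr : y = b * r) (ht : b = y * t) (hs : y = s * c) (hu : c = u * y) :
    IsBCInverse a b c y := by
  refine ⟨⟨r * a, ?_⟩, ⟨a * s, ?_⟩, ?_, ?_⟩
  · calc y = y * a * y := hyay.symm
      _ = b * (r * a) * y := by rw [hr]; simp only [mul_assoc]
  · calc y = y * a * y := hyay.symm
      _ = y * (a * s) * c := by nth_rw 2 [hs]; simp only [mul_assoc]
  · calc y * a * b = y * a * y * t := by rw [ht]; simp only [mul_assoc]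
      _ = b := by rw [hyay, ht]
  · calc c * a * y = u * (y * a * y) := by rw [hu]; simp only [mul_assoc]
      _ = c := by rw [hyay, hu]

theorem isBCInverse_iff_exists :
    IsBCInverse a b c y ↔ y * a * y = y ∧
      ((∃ r, y = b * r) ∧ ∃ t, b = y * t) ∧ ((∃ s, y = s * c) ∧ ∃ u, c = u * y) := by
  refine ⟨fun h => ⟨h.mul_mul_self, ?_, ?_⟩,
    fun ⟨hyay, ⟨⟨_, hr⟩, ⟨_, ht⟩⟩, ⟨⟨_, hs⟩, ⟨_, hu⟩⟩⟩ => .of_mul_mul_self hyay hr ht hs hu⟩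
  · obtain ⟨⟨r, hr⟩, -, hb, -⟩ := h
    exact ⟨⟨r * y, by rw [← mul_assoc, ← hr]⟩, ⟨a * b, by rw [← mul_assoc, hb]⟩⟩
  · obtain ⟨-, ⟨s, hs⟩, -, hc⟩ := h
    exact ⟨⟨y * s, hs⟩, ⟨c * a, hc.symm⟩⟩

end Ring

theorem bc_inverse_iff {R : Type*} [Ring R] (a b c y : R) :
    IsBCInverse a b c y ↔
      y * a * y = y ∧
      {z : R | ∃ r : R, z = y * r} = {z : R | ∃ r : R, z = b * r} ∧
      {z : R | ∃ r : R, z = r * y} = {z : R | ∃ r : R, z = r * c} := by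
  rw [isBCInverse_iff_exists, setOf_exists_eq_mul_right_eq_iff,
    setOf_exists_eq_mul_left_eq_iff]
end

section
/- Let R be a unital ring and a, b, c ∈ R. Then a has a (b,c)-inverse if and only if b ∈ Rcab and c ∈ cabR. -/
section

variable {R : Type*} [Ring R] {a b c y r s : R}

theorem IsBCInverse.exists_eq_mul_left (h : IsBCInverse a b c y) :
    ∃ r : R, b = r * (c * a * b) := by
  obtain ⟨-, ⟨s, hs⟩, hb, -⟩ := h
  refine ⟨y * s, ?_⟩
  calc b = y * a * b := hb.symm
    _ = y * s * c * a * b := by rw [← hs]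
    _ = y * s * (c * a * b) := by simp only [mul_assoc]

theorem IsBCInverse.exists_eq_mul_right (h : IsBCInverse a b c y) :
    ∃ s : R, c = c * a * b * s := by
  obtain ⟨⟨r, hr⟩, -, -, hc⟩ := h
  refine ⟨r * y, ?_⟩
  calc c = c * a * y := hc.symm
    _ = c * a * (b * r * y) := by rw [← hr]
    _ = c * a * b * (r * y) := by simp only [mul_assoc]

theorem isBCInverse_mul_of_eq_mul (hr : b = r * (c * a * b)) (hs : c = c * a * b * s) :
    IsBCInverse a b c (b * s) := by
  have hy : b * s = r * c := by
    conv_lhs => rw [hr]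
    rw [mul_assoc, ← hs]
  have hyay : b * s * a * (b * s) = b * s := by
    calc b * s * a * (b * s) = r * c * a * (b * s) := by rw [← hy]
      _ = r * (c * a * b * s) := by simp only [mul_assoc]
      _ = b * s := by rw [← hs, hy]
  refine ⟨⟨s * a, ?_⟩, ⟨a * r, ?_⟩, ?_, ?_⟩
  · calc b * s = b * s * a * (b * s) := hyay.symm
      _ = b * (s * a) * (b * s) := by simp only [mul_assoc]
  · calc b * s = b * s * a * (r * c) := by rw [← hy, hyay]
      _ = b * s * (a * r) * c := by simp only [mul_assoc]
  · calc b * s * a * b = r * (c * a * b) := by rw [hy]; simp only [mul_assoc]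
      _ = b := hr.symm
  · calc c * a * (b * s) = c * a * b * s := by simp only [mul_assoc]
      _ = c := hs.symm

end

theorem bc_invertible_iff {R : Type*} [Ring R] (a b c : R) :
    (∃ y : R, IsBCInverse a b c y) ↔
      (∃ r : R, b = r * (c * a * b)) ∧ (∃ s : R, c = (c * a * b) * s) := by
  constructor
  · rintro ⟨y, hy⟩
    exact ⟨hy.exists_eq_mul_left, hy.exists_eq_mul_right⟩
  · rintro ⟨⟨r, hr⟩, ⟨s, hs⟩⟩
    exact ⟨b * s, isBCInverse_mul_of_eq_mul hr hs⟩
end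

section
/- Let R be a unital ring and a, b, c ∈ R. If a has a (b,c)-inverse, then cab, b, and c are all regular (i.e., each has an inner inverse). -/
def RingRegular {R : Type*} [Ring R] (x : R) : Prop := ∃ z : R, x * z * x = x

section

variable {R : Type*} [Ring R] {a b c y : R}

theorem ringRegular_of_eq_mul_mul_right {r : R} (hr : y = b * r * y) (hb : y * a * b = b) :
    RingRegular b :=
  ⟨r * y * a, calc
    b * (r * y * a) * b = (b * r * y) * a * b := by simp only [mul_assoc]
    _ = b := by rw [← hr, hb]⟩

theorem ringRegular_of_eq_mul_mul_left {s : R} (hs : y = y * s * c) (hc : c * a * y = c) :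
    RingRegular c :=
  ⟨a * y * s, calc
    c * (a * y * s) * c = c * a * (y * s * c) := by simp only [mul_assoc]
    _ = c := by rw [← hs, hc]⟩

theorem IsBCInverse.ringRegular_mul_mul (hy : IsBCInverse a b c y) : RingRegular (c * a * b) := by
  obtain ⟨⟨r, hr⟩, ⟨s, hs⟩, -, hc⟩ := hy
  refine ⟨r * y * s, ?_⟩
  calc c * a * b * (r * y * s) * (c * a * b)
      = c * a * ((b * r * y) * s * c) * a * b := by simp only [mul_assoc]
    _ = (c * a * y) * a * b := by rw [← hr, ← hs, mul_assoc c a y]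
    _ = c * a * b := by rw [hc]

end

theorem bc_invertible_regular {R : Type*} [Ring R] (a b c : R)
    (h : ∃ y : R, IsBCInverse a b c y) :
    RingRegular (c * a * b) ∧ RingRegular b ∧ RingRegular c := by
  obtain ⟨y, hy⟩ := h
  refine ⟨hy.ringRegular_mul_mul, ?_⟩
  obtain ⟨⟨r, hr⟩, ⟨s, hs⟩, hb, hc⟩ := hy
  exact ⟨ringRegular_of_eq_mul_mul_right hr hb, ringRegular_of_eq_mul_mul_left hs hc⟩
end

section
/- Let R be a unital ring and a, b, c ∈ R. Then a is (b,c)-invertible if and only if c is regular, (ab)° = b°, and R = abR ⊕ c° (internal direct sum of right ideals/additive subgroups). -/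
/-!
If `y` is a `(b,c)`-inverse of `a`, then `a * y` is an idempotent with image `abR` and kernel `c°`,
which gives the direct sum; `y * a * b = b` gives `(ab)° = b°`, and `y ∈ Rc` together with
`c * a * y = c` makes `c` regular.

Conversely, writing `1 = a * b * p + w` with `c * w = 0` gives `c * a * b * p = c`, and for an
inner inverse `z` of `c` the candidate is `y = b * p * z * c`. The elements
`a * b * (p * z * c * a * b)` and `a * b` both lie in `abR` and agree after multiplying by `c`, so
they are equal by directness of the sum; `(ab)° = b°` then yields `y * a * b = b`, while
`c * a * y = c * z * c = c`.
-/

section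

variable {R : Type*} [Ring R] {a b c y : R}

theorem IsBCInverse.of_eq_mul {r s : R} (hr : y = b * r) (hs : y = s * c)
    (hyab : y * a * b = b) (hcay : c * a * y = c) : IsBCInverse a b c y := by
  have hyay : y * a * y = y := by
    calc y * a * y = y * a * b * r := by rw [mul_assoc (y * a), ← hr]
      _ = y := by rw [hyab, hr]
  refine ⟨⟨r * a, ?_⟩, ⟨a * s, ?_⟩, hyab, hcay⟩
  · calc y = y * a * y := hyay.symm
      _ = b * (r * a) * y := by rw [← mul_assoc, ← hr]
  · calc y = y * a * y := hyay.symm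
      _ = y * (a * s) * c := by rw [← mul_assoc, mul_assoc (y * a), ← hs]

theorem mul_mul_eq_zero_iff_of_mul_mul_eq (hyab : y * a * b = b) (r : R) :
    a * b * r = 0 ↔ b * r = 0 := by
  refine ⟨fun h ↦ ?_, fun h ↦ by rw [mul_assoc, h, mul_zero]⟩
  calc b * r = y * (a * b * r) := by rw [← mul_assoc, ← mul_assoc, hyab]
    _ = 0 := by rw [h, mul_zero]

namespace IsBCInverse

theorem ringRegular_right (h : IsBCInverse a b c y) : RingRegular c := by
  obtain ⟨-, ⟨s, hs⟩, -, hcay⟩ := h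
  refine ⟨s, ?_⟩
  calc c * s * c = c * a * y * s * c := by rw [hcay]
    _ = c * a * (y * s * c) := by simp only [mul_assoc]
    _ = c := by rw [← hs, hcay]

theorem exists_eq_mul_add (h : IsBCInverse a b c y) (x : R) :
    ∃ r w : R, c * w = 0 ∧ x = a * b * r + w := by
  obtain ⟨⟨r, hr⟩, -, -, hcay⟩ := h
  refine ⟨r * y * x, x - a * y * x, ?_, ?_⟩
  · rw [mul_sub, ← mul_assoc, ← mul_assoc, hcay, sub_self]
  · calc x = a * (b * r * y) * x + (x - a * y * x) := by rw [← hr, add_sub_cancel]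
      _ = a * b * (r * y * x) + (x - a * y * x) := by noncomm_ring

theorem eq_zero_of_mul_eq_zero (h : IsBCInverse a b c y) {x : R} (hx : ∃ r : R, x = a * b * r)
    (hcx : c * x = 0) : x = 0 := by
  obtain ⟨-, ⟨s, hs⟩, hyab, -⟩ := h
  obtain ⟨t, rfl⟩ := hx
  have hyx : y * (a * b * t) = 0 := by
    rw [hs, mul_assoc, hcx, mul_zero]
  calc a * b * t = a * (y * a * b) * t := by rw [hyab]
    _ = a * (y * (a * b * t)) := by simp only [mul_assoc]
    _ = 0 := by rw [hyx, mul_zero]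

end IsBCInverse

theorem mul_eq_self_of_eq_mul_add {w p : R} (hw : c * w = 0) (h1 : 1 = a * b * p + w) :
    c * (a * b * p) = c := by
  calc c * (a * b * p) = c * (a * b * p + w) := by rw [mul_add, hw, add_zero]
    _ = c := by rw [← h1, mul_one]

theorem isBCInverse_of_regular_of_directSum {p z : R} (hz : c * z * c = c)
    (hp : c * (a * b * p) = c) (hann : ∀ r, a * b * r = 0 → b * r = 0)
    (huniq : ∀ r, c * (a * b * r) = 0 → a * b * r = 0) :
    IsBCInverse a b c (b * p * z * c) := by
  have hab : a * b * (p * z * c * a * b) = a * b := by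
    refine sub_eq_zero.mp ?_
    rw [← mul_sub_one]
    refine huniq _ ?_
    calc c * (a * b * (p * z * c * a * b - 1))
        = c * (a * b * p) * z * c * (a * b) - c * (a * b) := by noncomm_ring
      _ = 0 := by rw [hp, hz, sub_self]
  have hb : b * (p * z * c * a * b) = b := by
    refine sub_eq_zero.mp ?_
    rw [← mul_sub_one]
    exact hann _ (by rw [mul_sub_one, hab, sub_self])
  refine IsBCInverse.of_eq_mul (r := p * z * c) (s := b * p * z) (by simp only [mul_assoc]) rfl
    ?_ ?_
  · calc b * p * z * c * a * b = b * (p * z * c * a * b) := by simp only [mul_assoc]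
      _ = b := hb
  · calc c * a * (b * p * z * c) = c * (a * b * p) * z * c := by simp only [mul_assoc]
      _ = c := by rw [hp, hz]

end

theorem bc_invertible_iff_right {R : Type*} [Ring R] (a b c : R) :
    (∃ y : R, IsBCInverse a b c y) ↔
      RingRegular c ∧
      {r : R | (a * b) * r = 0} = {r : R | b * r = 0} ∧
      (∀ x : R, ∃ r w : R, c * w = 0 ∧ x = a * b * r + w) ∧
      (∀ x : R, (∃ r : R, x = a * b * r) → c * x = 0 → x = 0) := by
  constructor
  · rintro ⟨y, h⟩
    exact ⟨h.ringRegular_right, Set.ext (mul_mul_eq_zero_iff_of_mul_mul_eq h.2.2.1),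
      h.exists_eq_mul_add, fun _ ↦ h.eq_zero_of_mul_eq_zero⟩
  · rintro ⟨⟨z, hz⟩, hann, hdec, huniq⟩
    obtain ⟨p, w, hw, h1⟩ := hdec 1
    exact ⟨_, isBCInverse_of_regular_of_directSum hz (mul_eq_self_of_eq_mul_add hw h1)
      (fun _ hr ↦ hann.subset hr) (fun r ↦ huniq _ ⟨r, rfl⟩)⟩
end

section
/- Let R be a unital ring and a, b, c ∈ R. Then a is (b,c)-invertible if and only if b is regular, °(ca) = °c, and R = Rca ⊕ °b. -/
section BCInverse

variable {R : Type*} [Ring R] {a b c r s u v y z : R}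

theorem RingRegular.of_eq_mul_mul (hy : y = b * r * y) (hyab : y * a * b = b) : RingRegular b :=
  ⟨r * y * a, by
    calc b * (r * y * a) * b = b * r * y * (a * b) := by simp only [mul_assoc]
      _ = b := by rw [← hy, ← mul_assoc, hyab]⟩

theorem mul_mul_eq_zero_iff_of_mul_eq (hcay : c * a * y = c) (t : R) :
    t * (c * a) = 0 ↔ t * c = 0 := by
  constructor
  · intro h
    rw [← hcay, ← mul_assoc, ← mul_assoc, mul_assoc t, h, zero_mul]
  · intro h
    rw [← mul_assoc, h, zero_mul]

theorem exists_eq_mul_add_of_mul_eq (hys : y = y * s * c) (hyab : y * a * b = b) (x : R) :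
    ∃ r w : R, w * b = 0 ∧ x = r * (c * a) + w := by
  refine ⟨x * y * s, x - x * y * a, ?_, ?_⟩
  · calc (x - x * y * a) * b = x * b - x * (y * a * b) := by noncomm_ring
      _ = 0 := by rw [hyab, sub_self]
  · calc x = x * (y * s * c) * a + (x - x * y * a) := by rw [← hys]; noncomm_ring
      _ = x * y * s * (c * a) + (x - x * y * a) := by simp only [mul_assoc]

theorem eq_zero_of_mul_eq_zero_of_mem_mul (hy : y = b * r * y) (hcay : c * a * y = c)
    {x t : R} (hx : x = t * (c * a)) (hxb : x * b = 0) : x = 0 := by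
  have hxy : x * y = 0 := by
    rw [hy, ← mul_assoc, ← mul_assoc, hxb, zero_mul, zero_mul]
  calc x = t * (c * a * y) * a := by rw [hx, hcay, mul_assoc]
    _ = x * y * a := by rw [hx]; simp only [mul_assoc]
    _ = 0 := by rw [hxy, zero_mul]

theorem isBCInverse_mul_of_eq (hu : b = u * (c * a * b)) (hv : c = c * a * b * v) :
    IsBCInverse a b c (u * c) := by
  have hyab : u * c * a * b = b := by simpa only [mul_assoc] using hu.symm
  have hbv : u * c = b * v := by
    calc u * c = u * (c * a * b) * v := by rw [mul_assoc u, ← hv]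
      _ = b * v := by rw [← hu]
  have hcay : c * a * (u * c) = c := by
    rw [hbv]
    simpa only [mul_assoc] using hv.symm
  have hyay : u * c = u * c * a * (u * c) := by
    calc u * c = u * c * a * b * v := by rw [hyab, hbv]
      _ = u * c * a * (u * c) := by rw [hbv]; simp only [mul_assoc]
  refine ⟨⟨v * a, ?_⟩, ⟨a * u, ?_⟩, hyab, hcay⟩
  · calc u * c = b * v * a * (u * c) := by rw [← hbv]; exact hyay
      _ = b * (v * a) * (u * c) := by simp only [mul_assoc]
  · calc u * c = u * c * a * (u * c) := hyay
      _ = u * c * (a * u) * c := by simp only [mul_assoc]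

theorem eq_mul_mul_mul_of_regular (hz : b * z * b = b) (hr : b = r * (c * a * b))
    (hann : ∀ t : R, t * (c * a) = 0 → t * c = 0)
    (huniq : ∀ t : R, t * (c * a) * b = 0 → t * (c * a) = 0) :
    c = c * a * b * (z * r * c) := by
  have hker : (c * a * b * z * r - 1) * (c * a) * b = 0 := by
    calc (c * a * b * z * r - 1) * (c * a) * b
        = c * a * (b * z * (r * (c * a * b))) - c * a * b := by noncomm_ring
      _ = 0 := by rw [← hr, hz, sub_self]
  have hc := hann _ (huniq _ hker)
  rw [sub_mul, one_mul, sub_eq_zero] at hc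
  simpa only [mul_assoc] using hc.symm

end BCInverse

theorem bc_invertible_iff_left {R : Type*} [Ring R] (a b c : R) :
    (∃ y : R, IsBCInverse a b c y) ↔
      RingRegular b ∧
      {r : R | r * (c * a) = 0} = {r : R | r * c = 0} ∧
      (∀ x : R, ∃ r w : R, w * b = 0 ∧ x = r * (c * a) + w) ∧
      (∀ x : R, (∃ r : R, x = r * (c * a)) → x * b = 0 → x = 0) := by
  constructor
  · rintro ⟨y, ⟨r, hy⟩, ⟨s, hys⟩, hyab, hcay⟩
    refine ⟨RingRegular.of_eq_mul_mul hy hyab, ?_, exists_eq_mul_add_of_mul_eq hys hyab, ?_⟩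
    · ext t
      exact mul_mul_eq_zero_iff_of_mul_eq hcay t
    · rintro x ⟨t, hx⟩ hxb
      exact eq_zero_of_mul_eq_zero_of_mem_mul hy hcay hx hxb
  · rintro ⟨⟨z, hz⟩, hann, hdecomp, huniq⟩
    obtain ⟨r, w, hwb, hone⟩ := hdecomp 1
    have hr : b = r * (c * a * b) := by
      simpa only [one_mul, add_mul, hwb, add_zero, mul_assoc] using congrArg (· * b) hone
    have hc := eq_mul_mul_mul_of_regular hz hr
      (fun t ht => (Set.ext_iff.mp hann t).mp ht)
      (fun t htb => huniq _ ⟨t, rfl⟩ htb)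
    exact ⟨r * c, isBCInverse_mul_of_eq hr hc⟩
end

section
/- Let R be a unital ring and a, b, c ∈ R such that cab is regular with inner inverse t. Let x = b t c. Then x is the (b,c)-inverse of a if and only if b° = (cab)° and cR = cabR. -/
section

variable {R : Type*} [Ring R]

theorem isBCInverse_iff_of_eq_mul_mul {a b c t x : R} (hx : x = b * t * c) :
    IsBCInverse a b c x ↔ x * a * b = b ∧ c * a * x = c := by
  refine ⟨fun ⟨_, _, hab, hca⟩ => ⟨hab, hca⟩,
    fun ⟨hab, hca⟩ => ⟨⟨t * c * a, ?_⟩, ⟨a * b * t, ?_⟩, hab, hca⟩⟩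
  · calc x = b * t * (c * a * x) := by rw [hca, hx]
      _ = b * (t * c * a) * x := by noncomm_ring
  · calc x = x * a * b * t * c := by rw [hab, hx]
      _ = x * (a * b * t) * c := by noncomm_ring

theorem setOf_mul_eq_zero_eq_iff {u w t : R} (hw : ∃ v, w = v * u) (ht : w * t * w = w) :
    {r : R | u * r = 0} = {r : R | w * r = 0} ↔ u * t * w = u := by
  obtain ⟨v, rfl⟩ := hw
  constructor
  · intro h
    have hker : v * u * (t * (v * u) - 1) = 0 := by
      rw [mul_sub, mul_one, ← mul_assoc, ht, sub_self]
    have hu : u * (t * (v * u) - 1) = 0 := (Set.ext_iff.mp h _).mpr hker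
    rwa [mul_sub, mul_one, sub_eq_zero, ← mul_assoc] at hu
  · intro h
    ext r
    refine ⟨fun hr => ?_, fun hr => ?_⟩
    · change v * u * r = 0
      rw [mul_assoc, hr, mul_zero]
    · change u * r = 0
      rw [← h, mul_assoc, hr, mul_zero]

theorem setOf_exists_eq_mul_eq_iff {u w t : R} (hw : ∃ v, w = u * v) (ht : w * t * w = w) :
    {z : R | ∃ r, z = u * r} = {z : R | ∃ r, z = w * r} ↔ w * t * u = u := by
  constructor
  · intro h
    obtain ⟨s, hs⟩ := (Set.ext_iff.mp h u).mp ⟨1, (mul_one u).symm⟩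
    calc w * t * u = w * t * w * s := by rw [hs, mul_assoc (w * t)]
      _ = u := by rw [ht, hs]
  · intro h
    obtain ⟨v, hv⟩ := hw
    ext z
    refine ⟨fun ⟨r, hr⟩ => ⟨t * u * r, ?_⟩, fun ⟨r, hr⟩ => ⟨v * r, ?_⟩⟩
    · rw [hr, ← mul_assoc, ← mul_assoc, h]
    · rw [hr, hv, mul_assoc]

end

theorem bc_inverse_inner_expression {R : Type*} [Ring R] (a b c t : R)
    (ht : c * a * b * t * (c * a * b) = c * a * b) (x : R) (hx : x = b * t * c) :
    IsBCInverse a b c x ↔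
      ({r : R | b * r = 0} = {r : R | c * a * b * r = 0} ∧
       {z : R | ∃ r : R, z = c * r} = {z : R | ∃ r : R, z = c * a * b * r}) := by
  rw [isBCInverse_iff_of_eq_mul_mul hx,
    setOf_mul_eq_zero_eq_iff ⟨c * a, rfl⟩ ht,
    setOf_exists_eq_mul_eq_iff ⟨a * b, mul_assoc c a b⟩ ht, hx]
  simp only [mul_assoc]
end

section
/- Let R be a unital ring and a, d ∈ R such that dad is regular with inner inverse t. Let x = d t d. Then x is the inverse of a along d if and only if d° = (dad)° and dR = dadR. -/
/-- `y` is the inverse of `a` along `d`. -/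
def IsInverseAlong {R : Type*} [Ring R] (a d y : R) : Prop :=
  y * a * d = d ∧ d * a * y = d ∧
  {z : R | ∃ r : R, z = y * r} ⊆ {z : R | ∃ r : R, z = d * r} ∧
  {z : R | ∃ r : R, z = r * y} ⊆ {z : R | ∃ r : R, z = r * d}

/-! With `t` an inner inverse of `dad`, the identity `(dtd)ad = d` amounts to `d` killing
`t(dad) - 1`, which `dad` kills, and `da(dtd) = d` amounts to `d ∈ dad R`; conversely these two
identities exhibit `d` and `dad` as left and right multiples of each other. The ideal inclusions
required of `dtd` hold for any element of the form `d * _ * d`. -/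

section Ring

variable {R : Type*} [Ring R]

theorem setOf_mul_eq_zero_subset {p q v : R} (h : q = v * p) :
    {r : R | p * r = 0} ⊆ {r : R | q * r = 0} := by
  intro r (hr : p * r = 0)
  show q * r = 0
  rw [h, mul_assoc, hr, mul_zero]

theorem setOf_eq_mul_subset {p q u : R} (h : q = p * u) :
    {z : R | ∃ r : R, z = q * r} ⊆ {z : R | ∃ r : R, z = p * r} := by
  rintro z ⟨r, rfl⟩
  exact ⟨u * r, by rw [h, mul_assoc]⟩

theorem setOf_eq_mul_left_subset {p q u : R} (h : q = u * p) :
    {z : R | ∃ r : R, z = r * q} ⊆ {z : R | ∃ r : R, z = r * p} := by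
  rintro z ⟨r, rfl⟩
  exact ⟨r * u, by rw [h, mul_assoc]⟩

theorem mul_mul_eq_of_setOf_mul_eq_zero_subset {p q w : R} (hw : q * w * q = q)
    (h : {r : R | q * r = 0} ⊆ {r : R | p * r = 0}) : p * w * q = p := by
  have hq : q * (w * q - 1) = 0 := by rw [mul_sub, mul_one, ← mul_assoc, hw, sub_self]
  have hp : p * (w * q - 1) = 0 := h hq
  rwa [mul_sub, mul_one, sub_eq_zero, ← mul_assoc] at hp

theorem mul_mul_eq_of_mem_setOf_eq_mul {p q w : R} (hw : q * w * q = q)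
    (h : p ∈ {z : R | ∃ r : R, z = q * r}) : q * w * p = p := by
  obtain ⟨s, rfl⟩ := h
  rw [← mul_assoc, hw]

end Ring

theorem inverse_along_inner_expression {R : Type*} [Ring R] (a d t : R)
    (ht : d * a * d * t * (d * a * d) = d * a * d) (x : R) (hx : x = d * t * d) :
    IsInverseAlong a d x ↔
      ({r : R | d * r = 0} = {r : R | d * a * d * r = 0} ∧
       {z : R | ∃ r : R, z = d * r} = {z : R | ∃ r : R, z = d * a * d * r}) := by
  subst hx
  constructor
  · rintro ⟨hxad, hdax, -, -⟩
    refine ⟨(setOf_mul_eq_zero_subset (v := d * a) (by rw [mul_assoc])).antisymm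
        (setOf_mul_eq_zero_subset (v := d * t) ?_),
      (setOf_eq_mul_subset (u := t * d) ?_).antisymm
        (setOf_eq_mul_subset (u := a * d) (by simp only [mul_assoc]))⟩
    · simpa only [mul_assoc] using hxad.symm
    · simpa only [mul_assoc] using hdax.symm
  · rintro ⟨hker, hran⟩
    have hxad : d * t * (d * a * d) = d :=
      mul_mul_eq_of_setOf_mul_eq_zero_subset (by simpa only [mul_assoc] using ht) hker.ge
    have hdax : d * a * d * t * d = d :=
      mul_mul_eq_of_mem_setOf_eq_mul (by simpa only [mul_assoc] using ht)
        (hran ▸ ⟨1, (mul_one d).symm⟩)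
    refine ⟨?_, ?_, setOf_eq_mul_subset (u := t * d) ?_, setOf_eq_mul_left_subset (u := d * t) rfl⟩
    · simpa only [mul_assoc] using hxad
    · simpa only [mul_assoc] using hdax
    · simp only [mul_assoc]
end

section
/- Let R be a unital ring and a, b, c ∈ R with cab regular with inner inverse t. If a has a left (b,c)-inverse, then for every v ∈ R, the element b t c + v(1 − cab·t)c is a left (b,c)-inverse of a. -/
/-!
A left `(b,c)`-inverse `x` of `a` lies in `Rc`, say `x = r c`, so `b = x a b = r (cab)`: the
element `b` lies in the left ideal generated by `cab`, on which the inner inverse `t` acts through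
`b t (cab) = b`. The candidate is a right multiple of `c`, and
`(b t + v (1 - cab t)) c a b = b t (cab) + v (cab - cab t cab) = b + 0`.
-/

def IsLeftBCInverse {R : Type*} [Ring R] (a b c x : R) : Prop :=
  {z : R | ∃ r : R, z = r * x} ⊆ {z : R | ∃ r : R, z = r * c} ∧ x * a * b = b

section

variable {R : Type*} [Ring R] {a b c : R}

theorem isLeftBCInverse_mul_right_iff {y : R} :
    IsLeftBCInverse a b c (y * c) ↔ y * c * a * b = b :=
  ⟨And.right, fun h => ⟨fun _ ⟨s, hz⟩ => ⟨s * y, by rw [hz, mul_assoc]⟩, h⟩⟩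

theorem IsLeftBCInverse.exists_eq_mul {x : R} (hx : IsLeftBCInverse a b c x) :
    ∃ r : R, b = r * (c * a * b) := by
  obtain ⟨r, hr⟩ : ∃ r : R, x = r * c := hx.1 ⟨1, (one_mul x).symm⟩
  exact ⟨r, by rw [← mul_assoc, ← mul_assoc, ← hr, hx.2]⟩

end

theorem mul_mul_eq_self_of_eq_mul {M : Type*} [Semigroup M] {b w t r : M}
    (hw : w * t * w = w) (hb : b = r * w) : b * t * w = b := by
  rw [hb, mul_assoc r, mul_assoc r, hw]

theorem left_bc_inverse_general_solution {R : Type*} [Ring R] (a b c t : R)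
    (ht : c * a * b * t * (c * a * b) = c * a * b)
    (h : ∃ x : R, IsLeftBCInverse a b c x) (v : R) :
    IsLeftBCInverse a b c (b * t * c + v * (1 - c * a * b * t) * c) := by
  obtain ⟨x, hx⟩ := h
  obtain ⟨r, hr⟩ := hx.exists_eq_mul
  have hbt : b * t * (c * a * b) = b := mul_mul_eq_self_of_eq_mul ht hr
  rw [show b * t * c + v * (1 - c * a * b * t) * c = (b * t + v * (1 - c * a * b * t)) * c by
    noncomm_ring, isLeftBCInverse_mul_right_iff]
  calc (b * t + v * (1 - c * a * b * t)) * c * a * b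
      = b * t * (c * a * b) + v * (c * a * b - c * a * b * t * (c * a * b)) := by noncomm_ring
    _ = b := by rw [ht, hbt, sub_self, mul_zero, add_zero]
end

section
/- Let R be a unital ring and a, b, c ∈ R. If a has both a left (b,c)-inverse and a right (b,c)-inverse, then both are unique and they coincide. -/
def IsRightBCInverse {R : Type*} [Ring R] (a b c y : R) : Prop :=
  {z : R | ∃ r : R, z = y * r} ⊆ {z : R | ∃ r : R, z = b * r} ∧ c * a * y = c

/-! For a left `(b,c)`-inverse `x` and a right `(b,c)`-inverse `y`, the element `x * a * y`
equals `x` because `x ∈ R c` and `c * a * y = c`, and equals `y` because `y ∈ b R` and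
`x * a * b = b`. -/

section

variable {R : Type*} [Ring R] {a b c x y : R}

theorem IsLeftBCInverse.mul_mul_eq_left (hx : IsLeftBCInverse a b c x) (hy : c * a * y = c) :
    x * a * y = x := by
  obtain ⟨r, rfl⟩ := hx.1 ⟨1, (one_mul x).symm⟩
  simp only [mul_assoc] at hy ⊢
  rw [hy]

theorem IsRightBCInverse.mul_mul_eq_right (hy : IsRightBCInverse a b c y) (hx : x * a * b = b) :
    x * a * y = y := by
  obtain ⟨s, rfl⟩ := hy.1 ⟨1, (mul_one y).symm⟩
  rw [← mul_assoc, hx]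

theorem IsLeftBCInverse.eq_of_isRightBCInverse (hx : IsLeftBCInverse a b c x)
    (hy : IsRightBCInverse a b c y) : x = y :=
  (hx.mul_mul_eq_left hy.2).symm.trans (hy.mul_mul_eq_right hx.2)

end

theorem left_right_bc_inverse_unique_general {R : Type*} [Ring R] (a b c : R) :
    ∀ x y : R, IsLeftBCInverse a b c x → IsRightBCInverse a b c y → x = y :=
  fun _ _ hx hy => hx.eq_of_isRightBCInverse hy

theorem left_right_bc_inverse_unique {R : Type*} [Ring R] (a b c : R)
    (hl : ∃ x : R, IsLeftBCInverse a b c x) (hr : ∃ y : R, IsRightBCInverse a b c y) :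
    ∀ x y : R, IsLeftBCInverse a b c x → IsRightBCInverse a b c y → x = y :=
  left_right_bc_inverse_unique_general a b c
end

section
/- Let R be a unital ring and a, b, c, u, v ∈ R with bR = uR and Rc = Rv. Then a is (b,c)-invertible if and only if a is (u,v)-invertible, and in this case the (b,c)-inverse of a equals the (u,v)-inverse of a. -/
section Monoid

variable {M : Type*} [Monoid M] {b c u v : M}

theorem dvd_of_setOf_mul_right_eq
    (h : {z : M | ∃ r : M, z = b * r} = {z : M | ∃ r : M, z = u * r}) :
    u ∣ b :=
  (Set.ext_iff.mp h b).mp ⟨1, (mul_one b).symm⟩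

theorem exists_eq_mul_of_setOf_mul_left_eq
    (h : {z : M | ∃ r : M, z = r * c} = {z : M | ∃ r : M, z = r * v}) :
    ∃ t : M, c = t * v :=
  (Set.ext_iff.mp h c).mp ⟨1, (one_mul c).symm⟩

end Monoid

theorem IsBCInverse.of_dvd {R : Type*} [Ring R] {a b c u v y : R} (h : IsBCInverse a b c y)
    (hub : u ∣ b) (hbu : b ∣ u) (hvc : ∃ t : R, c = t * v) (hcv : ∃ w : R, v = w * c) :
    IsBCInverse a u v y := by
  obtain ⟨⟨r, hr⟩, ⟨s, hs⟩, hb, hc⟩ := h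
  obtain ⟨p, hp⟩ := hub
  obtain ⟨q, hq⟩ := hbu
  obtain ⟨t, ht⟩ := hvc
  obtain ⟨w, hw⟩ := hcv
  refine ⟨⟨p * r, ?_⟩, ⟨s * t, ?_⟩, ?_, ?_⟩
  · rw [hp] at hr
    simpa only [mul_assoc] using hr
  · rw [ht] at hs
    simpa only [mul_assoc] using hs
  · calc y * a * u = y * a * b * q := by rw [hq, ← mul_assoc]
      _ = u := by rw [hb, hq]
  · calc v * a * y = w * (c * a * y) := by rw [hw]; simp only [mul_assoc]
      _ = v := by rw [hc, hw]

theorem bc_inverse_transfer {R : Type*} [Ring R] (a b c u v : R)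
    (hbu : {z : R | ∃ r : R, z = b * r} = {z : R | ∃ r : R, z = u * r})
    (hcv : {z : R | ∃ r : R, z = r * c} = {z : R | ∃ r : R, z = r * v}) :
    ((∃ y : R, IsBCInverse a b c y) ↔ (∃ y : R, IsBCInverse a u v y)) ∧
    (∀ y : R, IsBCInverse a b c y → IsBCInverse a u v y) := by
  have hu_dvd_b := dvd_of_setOf_mul_right_eq hbu
  have hb_dvd_u := dvd_of_setOf_mul_right_eq hbu.symm
  have hc_mul_v := exists_eq_mul_of_setOf_mul_left_eq hcv
  have hv_mul_c := exists_eq_mul_of_setOf_mul_left_eq hcv.symm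
  have forward : ∀ y, IsBCInverse a b c y → IsBCInverse a u v y :=
    fun y h => h.of_dvd hu_dvd_b hb_dvd_u hc_mul_v hv_mul_c
  have backward : ∀ y, IsBCInverse a u v y → IsBCInverse a b c y :=
    fun y h => h.of_dvd hb_dvd_u hu_dvd_b hv_mul_c hc_mul_v
  exact ⟨⟨fun ⟨y, h⟩ => ⟨y, forward y h⟩, fun ⟨y, h⟩ => ⟨y, backward y h⟩⟩, forward⟩
end

section
/- Let R be a unital ring and a, b ∈ R. Then the following are equivalent: (1) there exists y ∈ R with aya = a, yay = y, and yR = bR; (2) a is regular, aR = abR, and (ab)° = b°; (3) a is regular and R = a° ⊕ bR. -/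
theorem setOf_dvd_eq_setOf_dvd_iff {M : Type*} [Monoid M] (a b : M) :
    {z : M | a ∣ z} = {z : M | b ∣ z} ↔ a ∣ b ∧ b ∣ a := by
  constructor
  · intro h
    exact ⟨(Set.ext_iff.mp h b).mpr dvd_rfl, (Set.ext_iff.mp h a).mp dvd_rfl⟩
  · rintro ⟨hab, hba⟩
    ext z
    exact ⟨hba.trans, hab.trans⟩

theorem setOf_mul_mul_eq_zero_eq_iff {M : Type*} [MonoidWithZero M] (a b : M) :
    {r : M | a * b * r = 0} = {r : M | b * r = 0} ↔ ∀ x : M, a * x = 0 → b ∣ x → x = 0 := by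
  constructor
  · rintro h x hx ⟨r, rfl⟩
    exact (Set.ext_iff.mp h r).mp (show a * b * r = 0 by rwa [mul_assoc])
  · intro h
    ext r
    refine ⟨fun hr => h (b * r) (by rwa [← mul_assoc]) (dvd_mul_right b r), fun hr => ?_⟩
    show a * b * r = 0
    rw [mul_assoc, hr, mul_zero]

theorem forall_eq_annihilated_add_mul_iff_mul_dvd {R : Type*} [Ring R] (a b : R) :
    (∀ x : R, ∃ w r : R, a * w = 0 ∧ x = w + b * r) ↔ a * b ∣ a := by
  constructor
  · intro h
    obtain ⟨w, r, hw, h1⟩ := h 1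
    exact ⟨r, calc a = a * 1 := (mul_one a).symm
      _ = a * b * r := by rw [h1, mul_add, hw, zero_add, mul_assoc]⟩
  · rintro ⟨s, hs⟩ x
    refine ⟨x - b * (s * x), s * x, ?_, by abel⟩
    rw [mul_sub, ← mul_assoc, ← mul_assoc, ← hs, sub_self]

theorem reflexive_inverse_of_inner_inverse {S : Type*} [Semigroup S] {a g : S}
    (h : a * g * a = a) :
    a * (g * a * g) * a = a ∧ g * a * g * a * (g * a * g) = g * a * g := by
  constructor
  · calc a * (g * a * g) * a = a * g * a * g * a := by simp only [mul_assoc]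
      _ = a := by rw [h, h]
  · calc g * a * g * a * (g * a * g) = g * (a * g * a) * (g * a * g) := by simp only [mul_assoc]
      _ = g * a * (g * a * g) := by rw [h]
      _ = g * (a * g * a) * g := by simp only [mul_assoc]
      _ = g * a * g := by rw [h]

theorem mul_dvd_of_inner_inverse_of_dvd {S : Type*} [Semigroup S] {a b y : S}
    (hy : a * y * a = a) (hby : b ∣ y) : a * b ∣ a := by
  obtain ⟨t, rfl⟩ := hby
  exact ⟨t * a, calc a = a * (b * t) * a := hy.symm
    _ = a * b * (t * a) := by simp only [mul_assoc]⟩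

theorem eq_zero_of_reflexive_of_dvd {M : Type*} [MonoidWithZero M] {a b x y : M}
    (hy : y * a * y = y) (hyb : y ∣ b) (hx : a * x = 0) (hbx : b ∣ x) : x = 0 := by
  obtain ⟨u, rfl⟩ := hyb.trans hbx
  calc y * u = y * a * y * u := by rw [hy]
    _ = y * (a * (y * u)) := by simp only [mul_assoc]
    _ = 0 := by rw [hx, mul_zero]

theorem dvd_of_inner_inverse_of_dvd {R : Type*} [Ring R] {a b y : R}
    (hab : ∀ x : R, a * x = 0 → b ∣ x → x = 0) (hy : a * y * a = a) (hby : b ∣ y) : y ∣ b := by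
  have hann : a * (b - y * (a * b)) = 0 := by
    rw [mul_sub, ← mul_assoc, ← mul_assoc, hy, sub_self]
  have hdvd : b ∣ b - y * (a * b) := dvd_sub dvd_rfl (hby.mul_right _)
  exact ⟨a * b, (sub_eq_zero.mp (hab _ hann hdvd))⟩

theorem exists_reflexive_inverse_of_mul_dvd {R : Type*} [Ring R] {a b z : R}
    (hz : a * z * a = a) (hab : a * b ∣ a) (hint : ∀ x : R, a * x = 0 → b ∣ x → x = 0) :
    ∃ y : R, a * y * a = a ∧ y * a * y = y ∧ y ∣ b ∧ b ∣ y := by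
  obtain ⟨s, hs⟩ := hab
  have hg : a * (b * s * z) * a = a :=
    calc a * (b * s * z) * a = a * b * s * z * a := by simp only [mul_assoc]
      _ = a := by rw [← hs, hz]
  obtain ⟨hinner, hrefl⟩ := reflexive_inverse_of_inner_inverse hg
  have hby : b ∣ b * s * z * a * (b * s * z) := ⟨s * z * a * (b * s * z), by simp only [mul_assoc]⟩
  exact ⟨_, hinner, hrefl, dvd_of_inner_inverse_of_dvd hint hinner hby, hby⟩

theorem inner_outer_inverse_tfae_range {R : Type*} [Ring R] (a b : R) :
    List.TFAE
      [∃ y : R, a * y * a = a ∧ y * a * y = y ∧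
         {z : R | ∃ r : R, z = y * r} = {z : R | ∃ r : R, z = b * r},
       RingRegular a ∧ {z : R | ∃ r : R, z = a * r} = {z : R | ∃ r : R, z = a * b * r} ∧
         {r : R | a * b * r = 0} = {r : R | b * r = 0},
       RingRegular a ∧ (∀ x : R, ∃ w r : R, a * w = 0 ∧ x = w + b * r) ∧
         (∀ x : R, a * x = 0 → (∃ r : R, x = b * r) → x = 0)] := by
  simp only [← dvd_def, setOf_dvd_eq_setOf_dvd_iff, dvd_mul_right, true_and,
    setOf_mul_mul_eq_zero_eq_iff, forall_eq_annihilated_add_mul_iff_mul_dvd]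
  tfae_have 1 → 2 := fun ⟨y, hy, hrefl, hyb, hby⟩ =>
    ⟨⟨y, hy⟩, mul_dvd_of_inner_inverse_of_dvd hy hby,
      fun _ hx hbx => eq_zero_of_reflexive_of_dvd hrefl hyb hx hbx⟩
  tfae_have 2 → 1 := fun ⟨⟨z, hz⟩, hab, hint⟩ => exists_reflexive_inverse_of_mul_dvd hz hab hint
  tfae_have 2 ↔ 3 := Iff.rfl
  tfae_finish
end

section
/- Let R be a unital ring and a, c ∈ R. Then the following are equivalent: (1) there exists y ∈ R with aya = a, yay = y, and Ry = Rc; (2) a is regular, Rca = Ra, and °(ca) = °c; (3) a is regular and R = °a ⊕ Rc. -/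
section

variable {R : Type*} [Ring R]

theorem setOf_eq_mul_subset_setOf_eq_mul_iff {x y : R} :
    {z : R | ∃ r, z = r * x} ⊆ {z | ∃ r, z = r * y} ↔ ∃ t, x = t * y := by
  refine ⟨fun h => h ⟨1, (one_mul x).symm⟩, ?_⟩
  rintro ⟨t, rfl⟩ _ ⟨r, rfl⟩
  exact ⟨r * t, (mul_assoc r t y).symm⟩

theorem setOf_eq_mul_eq_setOf_eq_mul_iff {x y : R} :
    {z : R | ∃ r, z = r * x} = {z | ∃ r, z = r * y} ↔ (∃ t, x = t * y) ∧ ∃ s, y = s * x := by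
  rw [Set.Subset.antisymm_iff, setOf_eq_mul_subset_setOf_eq_mul_iff,
    setOf_eq_mul_subset_setOf_eq_mul_iff]

theorem setOf_mul_mul_eq_zero_eq_iff_s14 {c a : R} :
    {r : R | r * (c * a) = 0} = {r | r * c = 0} ↔ ∀ r, r * (c * a) = 0 → r * c = 0 := by
  refine ⟨fun h r hr => (Set.ext_iff.mp h r).mp hr, fun h => Set.ext fun r => ⟨h r, ?_⟩⟩
  intro hr
  change r * (c * a) = 0
  rw [← mul_assoc, hr, zero_mul]

theorem mul_eq_zero_of_mul_mul_eq_zero_of_outer_inverse {a c y s r : R} (hy : y * a * y = y)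
    (hc : c = s * y) (hr : r * (c * a) = 0) : r * c = 0 :=
  calc r * c = r * (s * (y * a * y)) := by rw [hy, hc]
    _ = r * (s * y * a) * y := by noncomm_ring
    _ = 0 := by rw [← hc, hr, zero_mul]

theorem exists_add_mul_of_eq_mul_mul {a c t : R} (ht : a = t * (c * a)) (x : R) :
    ∃ w r : R, w * a = 0 ∧ x = w + r * c := by
  refine ⟨x - x * t * c, x * t, ?_, by noncomm_ring⟩
  calc (x - x * t * c) * a = x * a - x * (t * (c * a)) := by noncomm_ring
    _ = 0 := by rw [← ht, sub_self]

theorem mul_mul_eq_self_and_of_inner_inverse {a c z t : R} (hz : a * z * a = a)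
    (hza : z * a = t * c * a) :
    a * (z * a * t * c) * a = a ∧ z * a * t * c * a * (z * a * t * c) = z * a * t * c := by
  have hidem : z * a * (z * a) = z * a := by
    rw [← mul_assoc, mul_assoc z a z, mul_assoc z (a * z) a, hz]
  constructor
  · calc a * (z * a * t * c) * a = a * z * a * (t * c * a) := by noncomm_ring
      _ = a := by rw [hz, ← hza, ← mul_assoc, hz]
  · calc z * a * t * c * a * (z * a * t * c) = z * a * (t * c * a) * (z * a) * t * c := by
          noncomm_ring
      _ = z * a * t * c := by rw [← hza, hidem, hidem]

theorem eq_mul_mul_of_inner_inverse {a c y s : R}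
    (hdisj : ∀ x : R, x * a = 0 → (∃ r : R, x = r * c) → x = 0) (hy : a * y * a = a)
    (hyc : y = s * c) : c = c * a * y := by
  refine sub_eq_zero.mp (hdisj (c - c * a * y) ?_ ⟨1 - c * a * s, ?_⟩)
  · calc (c - c * a * y) * a = c * a - c * (a * y * a) := by noncomm_ring
      _ = 0 := by rw [hy, sub_self]
  · rw [hyc]; noncomm_ring

end

theorem inner_outer_inverse_tfae_corange {R : Type*} [Ring R] (a c : R) :
    List.TFAE
      [∃ y : R, a * y * a = a ∧ y * a * y = y ∧
         {z : R | ∃ r : R, z = r * y} = {z : R | ∃ r : R, z = r * c},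
       RingRegular a ∧ {z : R | ∃ r : R, z = r * a} = {z : R | ∃ r : R, z = r * (c * a)} ∧
         {r : R | r * (c * a) = 0} = {r : R | r * c = 0},
       RingRegular a ∧ (∀ x : R, ∃ w r : R, w * a = 0 ∧ x = w + r * c) ∧
         (∀ x : R, x * a = 0 → (∃ r : R, x = r * c) → x = 0)] := by
  simp only [setOf_eq_mul_eq_setOf_eq_mul_iff, setOf_mul_mul_eq_zero_eq_iff_s14]
  tfae_have 1 → 2 := by
    rintro ⟨y, hy, hyay, ⟨t, rfl⟩, s, hc⟩
    refine ⟨⟨_, hy⟩, ⟨⟨a * t, ?_⟩, c, rfl⟩, fun r =>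
      mul_eq_zero_of_mul_mul_eq_zero_of_outer_inverse hyay hc⟩
    calc a = a * (t * c) * a := hy.symm
      _ = a * t * (c * a) := by noncomm_ring
  tfae_have 2 → 3 := by
    rintro ⟨hreg, ⟨⟨t, ht⟩, -⟩, hann⟩
    refine ⟨hreg, exists_add_mul_of_eq_mul_mul ht, ?_⟩
    rintro x hxa ⟨r, rfl⟩
    exact hann r (by rwa [← mul_assoc])
  tfae_have 3 → 1 := by
    rintro ⟨⟨z, hz⟩, hdec, hdisj⟩
    obtain ⟨w, t, hwa, hzwt⟩ := hdec z
    have hza : z * a = t * c * a := by rw [hzwt, add_mul, hwa, zero_add]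
    obtain ⟨hy, hyay⟩ := mul_mul_eq_self_and_of_inner_inverse hz hza
    exact ⟨_, hy, hyay, ⟨_, rfl⟩, c * a, eq_mul_mul_of_inner_inverse hdisj hy rfl⟩
  tfae_finish
end

section
/- Let R be a ring with involution * and a ∈ R. Then a is core invertible if and only if aR = a²R, Ra*a = Ra, and (a²)° = a°. -/
/-!
An element is core invertible exactly when it is group invertible and has a {1,3}-inverse `y`;
the core inverse is then `a# a y`, and conversely `x² a` is the group inverse of `a` when `x` is
its core inverse. Group invertibility amounts to `aR = a²R` together with `(a²)° = a°`: the
annihilator condition upgrades `a = a² s` to `a s a = a`, after which `a s²` is the group inverse.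
A {1,3}-inverse exists exactly when `a ∈ R a* a`: from `a = t a* a` one checks that `t*` is one.
-/

/-- `x` is a core inverse of `a`. -/
def IsCoreInverse {R : Type*} [Ring R] [StarRing R] (a x : R) : Prop :=
  a * x * a = a ∧
  {z : R | ∃ r : R, z = x * r} = {z : R | ∃ r : R, z = a * r} ∧
  {z : R | ∃ r : R, z = r * x} = {z : R | ∃ r : R, z = r * star a}

section Principal

variable {M : Type*} [Monoid M]

theorem setOf_mul_right_subset_iff (a b : M) :
    {z : M | ∃ r, z = a * r} ⊆ {z | ∃ r, z = b * r} ↔ ∃ r, a = b * r :=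
  ⟨fun h => h ⟨1, (mul_one a).symm⟩,
    fun ⟨r, hr⟩ _ ⟨s, hs⟩ => ⟨r * s, by rw [hs, hr, mul_assoc]⟩⟩

theorem setOf_mul_left_subset_iff (a b : M) :
    {z : M | ∃ r, z = r * a} ⊆ {z | ∃ r, z = r * b} ↔ ∃ r, a = r * b :=
  ⟨fun h => h ⟨1, (one_mul a).symm⟩,
    fun ⟨r, hr⟩ _ ⟨s, hs⟩ => ⟨s * r, by rw [hs, hr, mul_assoc]⟩⟩

end Principal

theorem mul_eq_mul_of_forall_mul_eq_zero {R : Type*} [NonUnitalNonAssocRing R] {b c u v : R}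
    (h : ∀ r, b * r = 0 → c * r = 0) (huv : b * u = b * v) : c * u = c * v := by
  have := h (u - v) (by rw [mul_sub, huv, sub_self])
  rwa [mul_sub, sub_eq_zero] at this

section GroupInverse

def IsGroupInverse {M : Type*} [Monoid M] (a g : M) : Prop :=
  a * g * a = a ∧ g * a * g = g ∧ a * g = g * a

variable {R : Type*} [Ring R] {a : R}

theorem isGroupInverse_mul_mul {s : R} (hs : a = a * a * s)
    (hann : ∀ r, a * a * r = 0 → a * r = 0) : IsGroupInverse a (a * s * s) := by
  have hsa : a * s * a = a := by
    have := mul_eq_mul_of_forall_mul_eq_zero hann (u := s * a) (v := 1) (by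
      rw [← mul_assoc, ← hs, mul_one])
    rwa [mul_one, ← mul_assoc] at this
  have hssa : a * s * s * a = a * s := by
    have := mul_eq_mul_of_forall_mul_eq_zero hann (u := s * s * a) (v := s) <| by
      calc a * a * (s * s * a) = a * a * s * (s * a) := by simp only [mul_assoc]
        _ = a * s * a := by rw [← hs, mul_assoc]
        _ = a * a * s := hsa.trans hs
    simpa only [← mul_assoc] using this
  refine ⟨?_, ?_, ?_⟩
  · calc a * (a * s * s) * a = a * a * s * (s * a) := by simp only [mul_assoc]
      _ = a := by rw [← hs, ← mul_assoc, hsa]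
  · calc a * s * s * a * (a * s * s) = a * s * a * s * s := by rw [hssa]; simp only [mul_assoc]
      _ = a * s * s := by rw [hsa]
  · calc a * (a * s * s) = a * a * s * s := by simp only [mul_assoc]
      _ = a * s * s * a := by rw [← hs, hssa]

theorem exists_isGroupInverse_iff :
    (∃ g, IsGroupInverse a g) ↔ (∃ s, a = a * a * s) ∧ ∀ r, a * a * r = 0 → a * r = 0 := by
  constructor
  · rintro ⟨g, hgag, -, hcomm⟩
    -- `a = a g a = a² g`, and `a r = g a² r`
    refine ⟨⟨g, by rw [mul_assoc, hcomm, ← mul_assoc, hgag]⟩, fun r hr => ?_⟩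
    rw [← hgag, hcomm, mul_assoc, mul_assoc, ← mul_assoc a, hr, mul_zero]
  · rintro ⟨⟨s, hs⟩, hann⟩
    exact ⟨_, isGroupInverse_mul_mul hs hann⟩

end GroupInverse

section LeastSquaresInverse

theorem isSelfAdjoint_of_mul_star_self_eq {M : Type*} [Mul M] [StarMul M] {p : M}
    (h : p * star p = star p) : IsSelfAdjoint p :=
  IsSelfAdjoint.star_iff.mp (h ▸ IsSelfAdjoint.mul_star_self p)

/-- A {1,3}-inverse of `a`, in Penrose's numbering of the Moore–Penrose equations. -/
def IsLeastSquaresInverse {M : Type*} [Monoid M] [StarMul M] (a y : M) : Prop :=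
  a * y * a = a ∧ IsSelfAdjoint (a * y)

variable {M : Type*} [Monoid M] [StarMul M] {a : M}

theorem exists_isLeastSquaresInverse_iff :
    (∃ y, IsLeastSquaresInverse a y) ↔ ∃ t, a = t * (star a * a) := by
  constructor
  · rintro ⟨y, hyay, hself⟩
    refine ⟨star y, ?_⟩
    calc a = star (a * y) * a := by rw [hself.star_eq, hyay]
      _ = star y * (star a * a) := by rw [star_mul, mul_assoc]
  · rintro ⟨t, ht⟩
    have hstar : star a = star a * (a * star t) := by
      conv_lhs => rw [ht]
      simp only [star_mul, star_star, mul_assoc]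
    have hcomm : t * star a = a * star t := by
      conv_lhs => rw [hstar]
      rw [← mul_assoc, ← mul_assoc, mul_assoc t, ← ht]
    refine ⟨star t, ?_, ?_⟩
    · rw [← hcomm, mul_assoc, ← ht]
    · rw [IsSelfAdjoint, star_mul, star_star, hcomm]

end LeastSquaresInverse

section CoreInverse

variable {R : Type*} [Ring R] [StarRing R] {a x : R}

theorem isCoreInverse_iff :
    IsCoreInverse a x ↔ a * x * a = a ∧ ((∃ r, x = a * r) ∧ ∃ r, a = x * r) ∧
      (∃ r, x = r * star a) ∧ ∃ r, star a = r * x := by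
  simp only [IsCoreInverse, Set.Subset.antisymm_iff, setOf_mul_right_subset_iff,
    setOf_mul_left_subset_iff]

theorem IsCoreInverse.isLeastSquaresInverse (hx : IsCoreInverse a x) :
    IsLeastSquaresInverse a x := by
  obtain ⟨hxa, -, ⟨v, hv⟩, -⟩ := isCoreInverse_iff.mp hx
  refine ⟨hxa, isSelfAdjoint_of_mul_star_self_eq ?_⟩
  -- `star (a x) ∈ aR`, on which left multiplication by `a x` is the identity
  have hmem : star (a * x) = a * (star v * star a) := by
    rw [hv, star_mul, star_mul, star_star, mul_assoc]
  rw [hmem, ← mul_assoc, ← mul_assoc, hxa, mul_assoc]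

theorem IsCoreInverse.isGroupInverse (hx : IsCoreInverse a x) :
    IsGroupInverse a (x * x * a) := by
  obtain ⟨hxa, ⟨⟨n, hn⟩, ⟨u, hu⟩⟩, ⟨v, hv⟩, -⟩ := isCoreInverse_iff.mp hx
  have hself := hx.isLeastSquaresInverse.2
  have hxax : x * a * x = x := by
    calc x * a * x = v * star (a * x * a) := by
          rw [star_mul, hself.star_eq, hv]; simp only [mul_assoc]
      _ = x := by rw [hxa, hv]
  have hxaa : x * (a * a) = a := by
    calc x * (a * a) = x * a * (x * u) := by rw [← hu, mul_assoc]
      _ = x * a * x * u := (mul_assoc _ _ _).symm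
      _ = a := by rw [hxax, ← hu]
  have haxx : a * x * x = x := by
    calc a * x * x = a * x * (a * n) := by rw [← hn]
      _ = a * x * a * n := (mul_assoc _ _ _).symm
      _ = x := by rw [hxa, ← hn]
  refine ⟨?_, ?_, ?_⟩
  · calc a * (x * x * a) * a = a * x * x * (a * a) := by simp only [mul_assoc]
      _ = a := by rw [haxx, hxaa]
  · calc x * x * a * a * (x * x * a) = x * (x * (a * a)) * x * x * a := by simp only [mul_assoc]
      _ = x * x * a := by rw [hxaa, hxax]
  · calc a * (x * x * a) = a * x * x * a := by simp only [mul_assoc]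
      _ = x * (x * (a * a)) := by rw [haxx, hxaa]
      _ = x * x * a * a := by simp only [mul_assoc]

theorem IsGroupInverse.isCoreInverse {g y : R} (hg : IsGroupInverse a g)
    (hy : IsLeastSquaresInverse a y) : IsCoreInverse a (g * a * y) := by
  obtain ⟨hgag, hgag', hcomm⟩ := hg
  obtain ⟨hyay, hself⟩ := hy
  have hax : a * (g * a * y) = a * y := by rw [← mul_assoc, ← mul_assoc, hgag]
  refine isCoreInverse_iff.mpr ⟨by rw [hax, hyay], ⟨⟨g * g * a * y, ?_⟩, ⟨a * a, ?_⟩⟩,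
    ⟨g * star y, ?_⟩, ⟨star a * a, ?_⟩⟩
  · calc g * a * y = g * a * g * a * y := by rw [hgag']
      _ = a * g * g * a * y := by rw [hcomm]
      _ = a * (g * g * a * y) := by simp only [mul_assoc]
  · calc a = g * a * a := by rw [← hcomm, hgag]
      _ = g * (a * y * a) * a := by rw [hyay]
      _ = g * a * y * (a * a) := by simp only [mul_assoc]
  · rw [mul_assoc g, ← hself.star_eq, star_mul, mul_assoc]
  · rw [mul_assoc, hax, ← star_star (a * y), ← star_mul, hself.star_eq, hyay]

theorem exists_isCoreInverse_iff :
    (∃ x, IsCoreInverse a x) ↔ (∃ g, IsGroupInverse a g) ∧ ∃ y, IsLeastSquaresInverse a y :=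
  ⟨fun ⟨_, hx⟩ => ⟨⟨_, hx.isGroupInverse⟩, ⟨_, hx.isLeastSquaresInverse⟩⟩,
    fun ⟨⟨_, hg⟩, ⟨_, hy⟩⟩ => ⟨_, hg.isCoreInverse hy⟩⟩

end CoreInverse

theorem core_invertible_iff {R : Type*} [Ring R] [StarRing R] (a : R) :
    (∃ x : R, IsCoreInverse a x) ↔
      ({z : R | ∃ r : R, z = a * r} = {z : R | ∃ r : R, z = a * a * r} ∧
       {z : R | ∃ r : R, z = r * (star a * a)} = {z : R | ∃ r : R, z = r * a} ∧
       {r : R | a * a * r = 0} = {r : R | a * r = 0}) := by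
  have hright : {z : R | ∃ r, z = a * r} = {z | ∃ r, z = a * a * r} ↔ ∃ s, a = a * a * s := by
    rw [Set.Subset.antisymm_iff, setOf_mul_right_subset_iff, setOf_mul_right_subset_iff]
    exact and_iff_left ⟨a, rfl⟩
  have hleft : {z : R | ∃ r, z = r * (star a * a)} = {z | ∃ r, z = r * a} ↔
      ∃ t, a = t * (star a * a) := by
    rw [Set.Subset.antisymm_iff, setOf_mul_left_subset_iff, setOf_mul_left_subset_iff]
    exact and_iff_right ⟨star a, rfl⟩
  have hann : {r : R | a * a * r = 0} = {r | a * r = 0} ↔ ∀ r, a * a * r = 0 → a * r = 0 := by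
    refine ⟨fun h r hr => h.subset hr, fun h => Set.Subset.antisymm (fun r => h r) fun r hr => ?_⟩
    show a * a * r = 0
    rw [mul_assoc, show a * r = 0 from hr, mul_zero]
  rw [exists_isCoreInverse_iff, exists_isGroupInverse_iff, exists_isLeastSquaresInverse_iff,
    hright, hleft, hann]
  exact and_right_comm.trans and_assoc
end

section
/- Let R be a unital ring and a, b, c, d ∈ R with b and c regular, dR = bR, and d° = c°. Then a is (b,c)-invertible if and only if a is invertible along d, and in this case the (b,c)-inverse of a coincides with the inverse of a along d. -/
/-! Both inverses only see the right ideal generated by `b` (resp. `d`) and the left ideal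
generated by `c` (resp. `d`): for a (b,c)-inverse `y` this is `y ∈ bR ∩ Rc` together with
`yab = b`, `cay = c`. So the two notions agree as soon as `dR = bR` and `Rd = Rc`. The latter
follows from `d° = c°`: `d` inherits regularity from `b` via `dR = bR`, and for regular `x`
(say `xzx = x`), `x° ⊆ y°` applied to `zx - 1` gives `y = yzx ∈ Rx`. -/

section

variable {R : Type*} [Ring R]

lemma exists_eq_mul_of_setOf_eq_mul_right_eq {x y : R}
    (h : {z : R | ∃ r : R, z = x * r} = {z : R | ∃ r : R, z = y * r}) :
    ∃ r, x = y * r :=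
  (Set.ext_iff.mp h x).mp ⟨1, (mul_one x).symm⟩

lemma setOf_eq_mul_right_subset_iff {x y : R} :
    {z : R | ∃ r : R, z = x * r} ⊆ {z : R | ∃ r : R, z = y * r} ↔ ∃ r, x = y * r := by
  refine ⟨fun h => h ⟨1, (mul_one x).symm⟩, ?_⟩
  rintro ⟨p, rfl⟩ z ⟨r, rfl⟩
  exact ⟨p * r, mul_assoc y p r⟩

lemma setOf_eq_mul_left_subset_iff {x y : R} :
    {z : R | ∃ r : R, z = r * x} ⊆ {z : R | ∃ r : R, z = r * y} ↔ ∃ r, x = r * y := by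
  refine ⟨fun h => h ⟨1, (one_mul x).symm⟩, ?_⟩
  rintro ⟨p, rfl⟩ z ⟨r, rfl⟩
  exact ⟨r * p, (mul_assoc r p y).symm⟩

lemma RingRegular.of_exists_mul_eq {b d : R} (hb : RingRegular b)
    (hbd : ∃ u, b = d * u) (hdb : ∃ v, d = b * v) : RingRegular d := by
  obtain ⟨z, hz⟩ := hb
  obtain ⟨u, hu⟩ := hbd
  obtain ⟨v, hv⟩ := hdb
  refine ⟨u * z, ?_⟩
  calc d * (u * z) * d = d * u * z * (b * v) := by rw [← hv, mul_assoc d u z]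
    _ = b * z * b * v := by rw [← hu]; simp only [mul_assoc]
    _ = d := by rw [hz, ← hv]

lemma RingRegular.exists_eq_mul_of_forall_mul_eq_zero {x y : R} (hx : RingRegular x)
    (h : ∀ r, x * r = 0 → y * r = 0) : ∃ t, y = t * x := by
  obtain ⟨z, hz⟩ := hx
  have hx0 : x * (z * x - 1) = 0 := by rw [mul_sub, ← mul_assoc, hz, mul_one, sub_self]
  have hy0 := h _ hx0
  rw [mul_sub, mul_one, sub_eq_zero] at hy0
  exact ⟨y * z, by rw [mul_assoc, hy0]⟩

theorem isBCInverse_iff_isInverseAlong {a b c d y : R}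
    (hbd : ∃ u, b = d * u) (hdb : ∃ v, d = b * v)
    (hcd : ∃ t, c = t * d) (hdc : ∃ e, d = e * c) :
    IsBCInverse a b c y ↔ IsInverseAlong a d y := by
  obtain ⟨u, hu⟩ := hbd
  obtain ⟨v, hv⟩ := hdb
  obtain ⟨t, ht⟩ := hcd
  obtain ⟨e, he⟩ := hdc
  simp only [IsInverseAlong, setOf_eq_mul_right_subset_iff, setOf_eq_mul_left_subset_iff]
  constructor
  · rintro ⟨⟨r, hr⟩, ⟨s, hs⟩, hyab, hcay⟩
    refine ⟨by rw [hv, ← mul_assoc, hyab], ?_, ⟨u * r * y, ?_⟩, ⟨y * s * t, ?_⟩⟩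
    · calc d * a * y = e * (c * a * y) := by rw [he]; simp only [mul_assoc]
        _ = d := by rw [hcay, he]
    · calc y = b * r * y := hr
        _ = d * (u * r * y) := by rw [hu]; simp only [mul_assoc]
    · calc y = y * s * c := hs
        _ = y * s * t * d := by rw [ht]; simp only [mul_assoc]
  · rintro ⟨hyad, hday, ⟨p, hp⟩, ⟨q, hq⟩⟩
    have hyay : y * a * y = y :=
      calc y * a * y = y * a * (d * p) := by rw [← hp]
        _ = d * p := by rw [← mul_assoc, hyad]
        _ = y := hp.symm
    refine ⟨⟨v * p * a, ?_⟩, ⟨a * q * e, ?_⟩, ?_, ?_⟩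
    · calc y = d * p * a * y := by rw [← hp, hyay]
        _ = b * (v * p * a) * y := by rw [hv]; simp only [mul_assoc]
    · calc y = y * a * (q * d) := by rw [← hq, hyay]
        _ = y * (a * q * e) * c := by rw [he]; simp only [mul_assoc]
    · calc y * a * b = y * a * d * u := by rw [hu, mul_assoc (y * a)]
        _ = b := by rw [hyad, hu]
    · calc c * a * y = t * (d * a * y) := by rw [ht]; simp only [mul_assoc]
        _ = c := by rw [hday, ht]

end

theorem bc_inverse_eq_inverse_along {R : Type*} [Ring R] (a b c d : R)
    (hb : RingRegular b) (hc : RingRegular c)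
    (hdb : {z : R | ∃ r : R, z = d * r} = {z : R | ∃ r : R, z = b * r})
    (hdc : {r : R | d * r = 0} = {r : R | c * r = 0}) :
    ((∃ y : R, IsBCInverse a b c y) ↔ (∃ y : R, IsInverseAlong a d y)) ∧
    (∀ y : R, IsBCInverse a b c y → IsInverseAlong a d y) := by
  have hann (r : R) : d * r = 0 ↔ c * r = 0 := Set.ext_iff.mp hdc r
  have hbd := exists_eq_mul_of_setOf_eq_mul_right_eq hdb.symm
  have hdb' := exists_eq_mul_of_setOf_eq_mul_right_eq hdb
  have hd := hb.of_exists_mul_eq hbd hdb'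
  have hcd := hd.exists_eq_mul_of_forall_mul_eq_zero fun r => (hann r).mp
  have hdc' := hc.exists_eq_mul_of_forall_mul_eq_zero fun r => (hann r).mpr
  have key (y : R) := isBCInverse_iff_isInverseAlong (a := a) (y := y) hbd hdb' hcd hdc'
  exact ⟨exists_congr key, fun y => (key y).mp⟩
end
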